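/- Let $V, Q$ be finite dimensional real inner product spaces and suppose $G : V \to Q$ is a linear map (discrete gradient) and $J : V \to W$ a linear map into another inner product space $W$ (jump map) such that $\|v\|_{1,h,\rho}^2 := \|G v\|_Q^2 + \rho^{-1} \|J v\|_W^2$ defines a norm on $V$ for each $\rho \in (0, 1]$. Define $b(( q, \hat q), v) = \langle q, G v \rangle_Q - \langle \hat q, J v \rangle_W$ for $(q, \hat q) \in Q \times W$ with norm $\|(q,\hat q)\|_{0,\rho}^2 = \|q\|_Q^2 + \rho \|\hat q\|_W^2$ (up to equivalence constants independent of $\rho$). Then choosing $q = G v$, $\hat q = -\rho^{-1} J v$ gives $b((q, \hat q), v) = \|v\|_{1,h,\rho}^2$ and $\|(q, \hat q)\|_{0,\rho}^2 \le \|v\|^2_{1,h,\rho} + \rho^{-1}\|Jv\|_W^2 \le 2\|v\|_{1,h,\rho}^2$ when $\rho \le 1$; hence the inf-sup constant of $b$ with respect to these norms is at least $1/\sqrt{2}$, uniformly in $\rho \in (0,1]$. -/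

import Mathlib

/-!
The test pair `(G v, -ρ⁻¹ • J v)` has `‖·‖_{0,ρ}`-norm exactly `‖v‖_{1,ρ}`, since
`ρ ‖ρ⁻¹ • J v‖² = ρ⁻¹ ‖J v‖²`, while `b` evaluates on it to `‖v‖²_{1,ρ}`; both the norm
bound and the inf-sup bound then reduce to `s ≤ 2 s` and `s / √2 ≤ s` for `s ≥ 0`.
-/

open scoped RealInnerProductSpace

section TestPair

variable {Q W : Type*} [NormedAddCommGroup Q] [InnerProductSpace ℝ Q]
  [NormedAddCommGroup W] [InnerProductSpace ℝ W]

theorem real_inner_self_sub_inner_neg_inv_smul (ρ : ℝ) (x : Q) (y : W) :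
    ⟪x, x⟫ - ⟪-(ρ⁻¹ • y), y⟫ = ‖x‖ ^ 2 + ρ⁻¹ * ‖y‖ ^ 2 := by
  rw [inner_neg_left, real_inner_smul_left, real_inner_self_eq_norm_sq,
    real_inner_self_eq_norm_sq]
  ring

theorem mul_norm_neg_inv_smul_sq (ρ : ℝ) (y : W) :
    ρ * ‖-(ρ⁻¹ • y)‖ ^ 2 = ρ⁻¹ * ‖y‖ ^ 2 := by
  rw [norm_neg, norm_smul, mul_pow, Real.norm_eq_abs, sq_abs, inv_pow, ← mul_assoc,
    ← div_eq_mul_inv, sq, div_self_mul_self']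

end TestPair

theorem one_div_sqrt_two_mul_sqrt_mul_sqrt_le {s : ℝ} (hs : 0 ≤ s) :
    1 / Real.sqrt 2 * (Real.sqrt s * Real.sqrt s) ≤ s := by
  rw [Real.mul_self_sqrt hs]
  exact mul_le_of_le_one_left hs (by
    rw [div_le_one (by positivity)]
    exact Real.one_le_sqrt.mpr one_le_two)

theorem wg_uniform_infsup_general {V Q W : Type*}
    [NormedAddCommGroup V] [InnerProductSpace ℝ V]
    [NormedAddCommGroup Q] [InnerProductSpace ℝ Q]
    [NormedAddCommGroup W] [InnerProductSpace ℝ W]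
    (G : V →ₗ[ℝ] Q) (J : V →ₗ[ℝ] W)
    (ρ : ℝ) (hρ0 : 0 < ρ) :
    ∀ v : V,
      (⟪G v, G v⟫ - ⟪-(ρ⁻¹ • J v), J v⟫ = ‖G v‖ ^ 2 + ρ⁻¹ * ‖J v‖ ^ 2) ∧
      (‖G v‖ ^ 2 + ρ * ‖-(ρ⁻¹ • J v)‖ ^ 2 ≤ 2 * (‖G v‖ ^ 2 + ρ⁻¹ * ‖J v‖ ^ 2)) ∧
      ((1 / Real.sqrt 2) *
          (Real.sqrt (‖G v‖ ^ 2 + ρ * ‖-(ρ⁻¹ • J v)‖ ^ 2) *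
            Real.sqrt (‖G v‖ ^ 2 + ρ⁻¹ * ‖J v‖ ^ 2)) ≤
        ⟪G v, G v⟫ - ⟪-(ρ⁻¹ • J v), J v⟫) := by
  intro v
  have hnonneg : 0 ≤ ‖G v‖ ^ 2 + ρ⁻¹ * ‖J v‖ ^ 2 := by positivity
  rw [real_inner_self_sub_inner_neg_inv_smul, mul_norm_neg_inv_smul_sq]
  exact ⟨rfl, by linarith, one_div_sqrt_two_mul_sqrt_mul_sqrt_le hnonneg⟩

/-- Abstract uniform inf-sup for the WG form `b_w`: with broken gradient `G`,
jump map `J`, `b((q,q̂),v) = ⟪q, Gv⟫ - ⟪q̂, Jv⟫`, norms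
`‖v‖²_{1,ρ} = ‖Gv‖² + ρ⁻¹‖Jv‖²` and `‖(q,q̂)‖²_{0,ρ} = ‖q‖² + ρ‖q̂‖²`, the test
choice `q = Gv`, `q̂ = -ρ⁻¹ • Jv` realizes `b = ‖v‖²_{1,ρ}`, satisfies
`‖(q,q̂)‖²_{0,ρ} ≤ 2 ‖v‖²_{1,ρ}` for `ρ ≤ 1`, and hence the inf-sup constant is at
least `1/√2`, uniformly in `ρ ∈ (0,1]`. -/
theorem wg_uniform_infsup {V Q W : Type*}
    [NormedAddCommGroup V] [InnerProductSpace ℝ V] [FiniteDimensional ℝ V]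
    [NormedAddCommGroup Q] [InnerProductSpace ℝ Q] [FiniteDimensional ℝ Q]
    [NormedAddCommGroup W] [InnerProductSpace ℝ W] [FiniteDimensional ℝ W]
    (G : V →ₗ[ℝ] Q) (J : V →ₗ[ℝ] W)
    (ρ : ℝ) (hρ0 : 0 < ρ) (hρ1 : ρ ≤ 1)
    (hnorm : ∀ v : V, ‖G v‖ ^ 2 + ρ⁻¹ * ‖J v‖ ^ 2 = 0 → v = 0) :
    ∀ v : V,
      (⟪G v, G v⟫ - ⟪-(ρ⁻¹ • J v), J v⟫ = ‖G v‖ ^ 2 + ρ⁻¹ * ‖J v‖ ^ 2) ∧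
      (‖G v‖ ^ 2 + ρ * ‖-(ρ⁻¹ • J v)‖ ^ 2 ≤ 2 * (‖G v‖ ^ 2 + ρ⁻¹ * ‖J v‖ ^ 2)) ∧
      ((1 / Real.sqrt 2) *
          (Real.sqrt (‖G v‖ ^ 2 + ρ * ‖-(ρ⁻¹ • J v)‖ ^ 2) *
            Real.sqrt (‖G v‖ ^ 2 + ρ⁻¹ * ‖J v‖ ^ 2)) ≤
        ⟪G v, G v⟫ - ⟪-(ρ⁻¹ • J v), J v⟫) :=
  wg_uniform_infsup_general G J ρ hρ0
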